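/- Fix constants 0 < m ≤ M and |μ| ≤ M, and let θ ∈ [m, M]. Define f¹(y, θ, μ) = ∫_ℝ exp(−θ(x−μ)²/2) · exp(−exp(x)) · exp(xy) dx for y ∈ ℕ. Then there exists a constant C > 0 depending only on m and M such that for all sufficiently large natural numbers y, f¹(y, θ, μ) ≥ C · exp(y·log(y+1)/2). -/

import Mathlib

/-!
On the window `x ∈ [a, a + 1]` with `a = log (y + 1) / 2 + 1` the factor `exp (x y)` is at least
`exp (y log (y + 1) / 2) · exp y`, while the Gaussian factor costs only `exp (-O((log y)²))`
and the factor `exp (-exp x)` only `exp (-e² √(y + 1))`; both losses are eventually absorbed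
by the spare `exp y`.
-/

open Real MeasureTheory

/-- Unnormalized marginal likelihood of the one-dimensional Poisson log-normal model. -/
noncomputable def f1 (y : ℕ) (θ μ : ℝ) : ℝ :=
  ∫ x : ℝ, Real.exp (-(θ * (x - μ) ^ 2) / 2) * Real.exp (-Real.exp x) * Real.exp (x * y)

open Set

lemma integrable_exp_neg_mul_sq_add_mul_add {b : ℝ} (hb : 0 < b) (c d : ℝ) :
    Integrable (fun x : ℝ => exp (-b * x ^ 2 + c * x + d)) := by
  have := (integrable_cexp_quadratic (b := (b : ℂ)) (by simpa using hb) c d).norm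
  convert this using 2 with x
  rw [Complex.norm_exp]
  norm_cast

lemma f1_eq_integral_exp (y : ℕ) (θ μ : ℝ) :
    f1 y θ μ = ∫ x : ℝ, exp (-(θ * (x - μ) ^ 2) / 2 - exp x + x * y) := by
  simp only [f1, sub_eq_add_neg, exp_add]

lemma integrable_f1_integrand (y : ℕ) {θ : ℝ} (hθ : 0 < θ) (μ : ℝ) :
    Integrable (fun x : ℝ => exp (-(θ * (x - μ) ^ 2) / 2 - exp x + x * y)) := by
  refine (integrable_exp_neg_mul_sq_add_mul_add (half_pos hθ) (θ * μ + y) (-(θ * μ ^ 2) / 2)).mono'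
    (by fun_prop) (.of_forall fun x => ?_)
  rw [norm_of_nonneg (exp_nonneg _), exp_le_exp]
  nlinarith [exp_pos x]

lemma mul_sub_le_integral_of_le_on_Icc {g : ℝ → ℝ} (hg : Integrable g) (hg0 : 0 ≤ g)
    {a b c : ℝ} (hab : a ≤ b) (hc : ∀ x ∈ Icc a b, c ≤ g x) :
    c * (b - a) ≤ ∫ x, g x := by
  calc c * (b - a) = c * volume.real (Icc a b) := by
        rw [Real.volume_real_Icc_of_le hab]
    _ ≤ ∫ x in Icc a b, g x :=
        setIntegral_ge_of_const_le_real measurableSet_Icc measure_Icc_lt_top.ne hc hg.integrableOn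
    _ ≤ ∫ x, g x := setIntegral_le_integral hg (.of_forall hg0)

lemma exp_le_f1 (y : ℕ) {θ μ M a : ℝ} (hθ : 0 < θ) (hθM : θ ≤ M) (hμ : |μ| ≤ M) (ha : 0 ≤ a) :
    exp (a * y - exp (a + 1) - M * (a + 1 + M) ^ 2 / 2) ≤ f1 y θ μ := by
  have hlower : ∀ x ∈ Icc a (a + 1), exp (a * y - exp (a + 1) - M * (a + 1 + M) ^ 2 / 2) ≤
      exp (-(θ * (x - μ) ^ 2) / 2 - exp x + x * y) := by
    rintro x ⟨hax, hxa⟩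
    obtain ⟨hμl, hμr⟩ := abs_le.1 hμ
    have hsq : (x - μ) ^ 2 ≤ (a + 1 + M) ^ 2 := sq_le_sq' (by linarith) (by linarith)
    have hquad : θ * (x - μ) ^ 2 ≤ M * (a + 1 + M) ^ 2 :=
      mul_le_mul hθM hsq (sq_nonneg _) (hθ.le.trans hθM)
    have hexp : exp x ≤ exp (a + 1) := exp_le_exp.2 hxa
    have hlin : a * y ≤ x * y := mul_le_mul_of_nonneg_right hax y.cast_nonneg
    rw [exp_le_exp]
    linarith
  simpa [f1_eq_integral_exp] using mul_sub_le_integral_of_le_on_Icc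
    (integrable_f1_integrand y hθ μ) (fun x => (exp_pos _).le) (by linarith) hlower

lemma mul_sq_add_sq_add_one_le_pow_four {M t : ℝ} (hM : 0 ≤ M) (ht : M + 10 ≤ t) :
    M * (2 * t + M) ^ 2 / 2 + 9 * t ^ 2 + 1 ≤ t ^ 4 := by
  have ht10 : 0 ≤ t - 10 := by linarith
  have hsq : (2 * t + M) ^ 2 ≤ 9 * t ^ 2 := by nlinarith
  have h1 : M * (2 * t + M) ^ 2 ≤ (t - 10) * (9 * t ^ 2) :=
    mul_le_mul (by linarith) hsq (sq_nonneg _) ht10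
  nlinarith [mul_nonneg (pow_nonneg (by linarith : (0:ℝ) ≤ t) 3) ht10,
    mul_nonneg (sq_nonneg t) ht10]

lemma exp_add_mul_sq_half_log_le_self {M y : ℝ} (hM : 0 ≤ M) (hy : (M + 10) ^ 4 ≤ y) :
    exp (log (y + 1) / 2 + 2) + M * (log (y + 1) / 2 + 2 + M) ^ 2 / 2 ≤ y := by
  have hy0 : 0 ≤ y := (pow_nonneg (by linarith) 4).trans hy
  have hy1 : 0 < y + 1 := by linarith
  set t := exp (log (y + 1) / 4) with ht
  have ht4 : t ^ 4 = y + 1 := by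
    rw [ht, ← exp_nat_mul, Nat.cast_ofNat, mul_div_cancel₀ _ four_ne_zero, exp_log hy1]
  -- `t = (y + 1) ^ (1/4)`, so that `log (y + 1) ≤ 4 (t - 1)` and `exp (log (y + 1) / 2) = t²`.
  have hMt : M + 10 ≤ t :=
    (pow_le_pow_iff_left₀ (by linarith) (exp_pos _).le four_ne_zero).1 (by linarith)
  have hlog : log (y + 1) / 2 + 2 ≤ 2 * t := by linarith [add_one_le_exp (log (y + 1) / 4)]
  have hexp : exp (log (y + 1) / 2 + 2) ≤ 9 * t ^ 2 :=
    calc exp (log (y + 1) / 2 + 2) = t ^ 2 * exp 1 ^ 2 := by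
          rw [ht, ← exp_nat_mul, ← exp_nat_mul, ← exp_add]; push_cast; ring_nf
      _ ≤ t ^ 2 * 3 ^ 2 := by gcongr; exact exp_one_lt_three.le
      _ = 9 * t ^ 2 := by ring
  have hsq : M * (log (y + 1) / 2 + 2 + M) ^ 2 ≤ M * (2 * t + M) ^ 2 := by
    have hlog0 : 0 ≤ log (y + 1) := log_nonneg (by linarith)
    gcongr
  linarith [mul_sq_add_sq_add_one_le_pow_four hM hMt]

theorem stmt_7_general (m M : ℝ) (hm : 0 < m) :
    ∃ C > (0 : ℝ), ∀ θ μ : ℝ, θ ∈ Set.Icc m M → |μ| ≤ M →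
      ∃ N : ℕ, ∀ y : ℕ, N ≤ y →
        C * Real.exp (y * Real.log (y + 1) / 2) ≤ f1 y θ μ := by
  refine ⟨1, one_pos, fun θ μ ⟨hmθ, hθM⟩ hμ => ⟨⌈(M + 10) ^ 4⌉₊, fun y hy => ?_⟩⟩
  have hbound := exp_add_mul_sq_half_log_le_self ((abs_nonneg μ).trans hμ) (Nat.ceil_le.1 hy)
  have ha : 0 ≤ log (y + 1) / 2 + 1 := by
    have := log_nonneg (by simp : (1 : ℝ) ≤ y + 1)
    positivity
  refine (one_mul _).trans_le ((exp_le_exp.2 ?_).trans (exp_le_f1 y (hm.trans_le hmθ) hθM hμ ha))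
  rw [show log (y + 1) / 2 + 1 + 1 = log (y + 1) / 2 + 2 by ring]
  linarith

/-- One-dimensional dominating-function lemma: for `θ ∈ [m, M]` and `|μ| ≤ M` there is a
constant `C > 0`, depending only on `m` and `M`, such that for all sufficiently large
`y`, `f¹(y, θ, μ) ≥ C · exp(y · log(y+1)/2)`. -/
theorem stmt_7 (m M : ℝ) (hm : 0 < m) (hmM : m ≤ M) :
    ∃ C > (0 : ℝ), ∀ θ μ : ℝ, θ ∈ Set.Icc m M → |μ| ≤ M →
      ∃ N : ℕ, ∀ y : ℕ, N ≤ y →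
        C * Real.exp (y * Real.log (y + 1) / 2) ≤ f1 y θ μ :=
  stmt_7_general m M hm
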